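/- Let σ be a positive semidefinite d×d matrix, T₁,…,T_k Hermitian d×d matrices, and X₁,…,X_ℓ Hermitian d×d matrices with X_j² = Id for all j. Let ε = (1/k)Σᵢ‖Tᵢσ^{1/2}‖_F² and δ = (1/ℓ)Σⱼ‖[Xⱼ, σ^{1/2}]‖_F², and assume Tr(σ) = 1 and σ ≠ 0. Then there exists a nonzero orthogonal projection R on C^d such that (1/k)Σᵢ‖TᵢR‖_F² ≤ C·ε·Tr(R) and (1/ℓ)Σⱼ‖[Xⱼ, R]‖_F² ≤ C·δ^{1/2}·Tr(R), for a universal constant C. -/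

import Mathlib

open Matrix ComplexOrder

/-- The square root of a positive semidefinite matrix, as defined in Mathlib (Dec 2024). -/
noncomputable def Matrix.PosSemidef.sqrt {n 𝕜 : Type*} [Fintype n] [DecidableEq n] [RCLike 𝕜]
    {A : Matrix n n 𝕜} (hA : A.PosSemidef) : Matrix n n 𝕜 :=
  hA.1.eigenvectorUnitary.1 * diagonal ((↑) ∘ (√·) ∘ hA.1.eigenvalues) *
  (star hA.1.eigenvectorUnitary : Matrix n n 𝕜)

/-- The Frobenius norm of a complex square matrix: `(Tr(AᴴA))^{1/2}`. -/
noncomputable def frobNorm {d : ℕ} (A : Matrix (Fin d) (Fin d) ℂ) : ℝ :=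
  Real.sqrt ((Aᴴ * A).trace.re)

/-- The Schatten-1 (nuclear) norm: the sum of singular values, i.e. `Tr((AᴴA)^{1/2})`. -/
noncomputable def nucNorm {d : ℕ} (A : Matrix (Fin d) (Fin d) ℂ) : ℝ :=
  ((Matrix.posSemidef_conjTranspose_mul_self A).sqrt).trace.re

/-!
Diagonalise `σ^{1/2} = U diag(s) U*`, so that `∑ sₙ² = Tr σ = 1`. For `R = U diag(a) U*` the
two costs are `∑ Wₘₙ aₙ²` and `∑ Vₘₙ (aₘ - aₙ)²`, where `W` and `V` average the squared moduli of
the entries of the `Tᵢ` and `Xⱼ` in the eigenbasis; `V` is doubly stochastic since each `Xⱼ` is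
unitary. The layer-cake formula writes `sₙ²` as an average of nested `0/1` vectors (spectral
projections of `σ^{1/2}` above a threshold); averaged over the layers, `Tr R` and the two costs
become `1`, `ε` and `∑ Vₘₙ |sₘ² - sₙ²|`, and the last is at most `2 √δ` by Cauchy–Schwarz, since
`|sₘ² - sₙ²| = (sₘ + sₙ) |sₘ - sₙ|`. By Markov's inequality some layer is good for both costs up to
a factor `3`.
-/

open Finset

theorem mul_sum_filter_lt_le_one {τ : Type*} [Fintype τ] {w N F : τ → ℝ} {a : ℝ} (c : ℝ)
    (hw : ∀ t, 0 ≤ w t) (hF : ∀ t, 0 ≤ F t) (ha : ∑ t, w t * F t ≤ a) :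
    c * ∑ t with c * a * N t < F t, w t * N t ≤ 1 := by
  set A := univ.filter fun t => c * a * N t < F t
  -- A point of `A` with positive mass makes the bound strict, which also covers `a = 0`.
  by_cases hM : ∑ t ∈ A, w t * N t = 0
  · rw [hM]; norm_num
  obtain ⟨t, htA, ht⟩ := exists_ne_zero_of_sum_ne_zero hM
  have hwt : 0 < w t := (hw t).lt_of_ne fun h => ht (by rw [← h, zero_mul])
  have hstrict : ∑ s ∈ A, w s * (c * a * N s) < ∑ s ∈ A, w s * F s := by
    refine sum_lt_sum (fun s hs => ?_) ⟨t, htA, ?_⟩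
    · exact mul_le_mul_of_nonneg_left (mem_filter.mp hs).2.le (hw s)
    · exact mul_lt_mul_of_pos_left (mem_filter.mp htA).2 hwt
  have hFA : ∑ s ∈ A, w s * F s ≤ a :=
    (sum_le_sum_of_subset_of_nonneg (subset_univ A) fun s _ _ => mul_nonneg (hw s) (hF s)).trans ha
  have ha0 : 0 ≤ a := (sum_nonneg fun s _ => mul_nonneg (hw s) (hF s)).trans ha
  have hscale : ∑ s ∈ A, w s * (c * a * N s) = a * (c * ∑ s ∈ A, w s * N s) := by
    rw [mul_sum, mul_sum]; exact sum_congr rfl fun s _ => by ring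
  nlinarith

theorem exists_le_mul_of_weighted_sum_le {τ : Type*} [Fintype τ] {w N F G : τ → ℝ} {a b : ℝ}
    (hw : ∀ t, 0 ≤ w t) (hN : ∀ t, 0 ≤ N t) (hF : ∀ t, 0 ≤ F t) (hG : ∀ t, 0 ≤ G t)
    (hS : ∑ t, w t * N t = 1) (ha : ∑ t, w t * F t ≤ a) (hb : ∑ t, w t * G t ≤ b) :
    ∃ t, 0 < N t ∧ F t ≤ 3 * a * N t ∧ G t ≤ 3 * b * N t := by
  by_contra! hbad
  have hcover : ∀ t, w t * N t ≤ (if 3 * a * N t < F t then w t * N t else 0)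
      + (if 3 * b * N t < G t then w t * N t else 0) := by
    intro t
    have hwN := mul_nonneg (hw t) (hN t)
    rcases (hN t).eq_or_lt with h | h
    · simp only [← h, mul_zero, ite_self, add_zero, le_refl]
    · by_cases hFt : 3 * a * N t < F t
      · split_ifs <;> linarith
      · simp [hFt, hbad t h (not_lt.mp hFt)]
  have := sum_le_sum fun t (_ : t ∈ univ) => hcover t
  rw [sum_add_distrib, ← sum_filter, ← sum_filter] at this
  linarith [mul_sum_filter_lt_le_one 3 hw hF ha (N := N),
    mul_sum_filter_lt_le_one 3 hw hG hb (N := N)]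

theorem Monotone.exists_nonneg_sum_Iic_eq {d : ℕ} {f : Fin d → ℝ} (hf : Monotone f)
    (h0 : ∀ n, 0 ≤ f n) : ∃ v : Fin d → ℝ, (∀ t, 0 ≤ v t) ∧ ∀ n, ∑ t ∈ Iic n, v t = f n := by
  set g : ℕ → ℝ := fun i => if h : i < d then f ⟨i, h⟩ else 0
  set prev : ℕ → ℝ := fun i => if i = 0 then 0 else g (i - 1)
  refine ⟨fun t => g t - prev t, fun t => ?_, fun n => ?_⟩
  · rcases Nat.eq_zero_or_pos t with ht | ht
    · simpa [g, prev, ht, t.pos] using h0 _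
    · have hle : f ⟨t - 1, by omega⟩ ≤ f t := hf (Fin.mk_le_of_le_val (by omega))
      simp [g, prev, ht.ne', t.isLt, show (t : ℕ) - 1 < d by omega, hle]
  · have := sum_map (Iic n) Fin.valEmbedding (fun i => g i - prev i)
    rw [Fin.map_valEmbedding_Iic, ← Nat.range_succ_eq_Iic,
      sum_range_induction _ prev (by simp [prev]) _ fun i _ => by simp [prev]] at this
    calc ∑ t ∈ Iic n, (g t - prev t) = prev (n + 1) := this.symm
      _ = f n := by simp [prev, g]

theorem exists_layer_cake {d : ℕ} {p : Fin d → ℝ} (hp : ∀ n, 0 ≤ p n) :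
    ∃ (v : Fin d → ℝ) (e : Fin d → Fin d → ℝ), (∀ t, 0 ≤ v t) ∧
      (∀ t n, e t n = 0 ∨ e t n = 1) ∧ (∀ n, ∑ t, v t * e t n = p n) ∧
      ∀ m n, ∑ t, v t * (e t m - e t n) ^ 2 = |p m - p n| := by
  set π := Tuple.sort p
  have hmono : Monotone (p ∘ π) := Tuple.monotone_sort p
  obtain ⟨v, hv, hv_sum⟩ := hmono.exists_nonneg_sum_Iic_eq fun t => hp (π t)
  -- Layers are indexed by positions in the sorted order, so ties in `p` are split across layers.
  set e : Fin d → Fin d → ℝ := fun t n => if t ≤ π.symm n then 1 else 0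
  have hlayer : ∀ n, ∑ t, v t * e t n = p n := fun n => by
    simp only [e, mul_ite, mul_one, mul_zero]
    rw [← sum_filter, filter_ge_eq_Iic, hv_sum]
    simp
  refine ⟨v, e, hv, fun t n => by by_cases h : t ≤ π.symm n <;> simp [e, h], hlayer, ?_⟩
  intro m n
  wlog hmn : π.symm m ≤ π.symm n generalizing m n
  · simp only [abs_sub_comm (p m), ← this n m (le_of_not_ge hmn)]
    exact sum_congr rfl fun t _ => by ring
  have hnested : ∀ t, (e t m - e t n) ^ 2 = e t n - e t m := fun t => by
    by_cases hm : t ≤ π.symm m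
    · simp [e, hm, hm.trans hmn]
    · by_cases hn : t ≤ π.symm n <;> simp [e, hm, hn]
  have hpmn : p m ≤ p n := by simpa using hmono hmn
  simp only [hnested, mul_sub, sum_sub_distrib, hlayer]
  rw [abs_sub_comm, abs_of_nonneg (sub_nonneg.mpr hpmn)]

theorem sum_mul_sum_sum_comm {τ ι : Type*} [Fintype τ] [Fintype ι] (v : τ → ℝ)
    (x : ι → ι → ℝ) (f : τ → ι → ι → ℝ) :
    ∑ t, v t * ∑ m, ∑ n, x m n * f t m n = ∑ m, ∑ n, x m n * ∑ t, v t * f t m n := by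
  simp_rw [mul_sum]
  rw [sum_comm]
  refine sum_congr rfl fun m _ => ?_
  rw [sum_comm]
  exact sum_congr rfl fun n _ => sum_congr rfl fun t _ => by ring

theorem exists_indicator_le {d : ℕ} {p : Fin d → ℝ} {y x : Fin d → Fin d → ℝ}
    (hp : ∀ n, 0 ≤ p n) (hp1 : ∑ n, p n = 1) (hy : ∀ m n, 0 ≤ y m n) (hx : ∀ m n, 0 ≤ x m n) :
    ∃ e : Fin d → ℝ, (∀ n, e n = 0 ∨ e n = 1) ∧ 0 < ∑ n, e n ∧
      ∑ m, ∑ n, y m n * e n ≤ 3 * (∑ m, ∑ n, y m n * p n) * ∑ n, e n ∧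
      ∑ m, ∑ n, x m n * (e m - e n) ^ 2 ≤ 3 * (∑ m, ∑ n, x m n * |p m - p n|) * ∑ n, e n := by
  obtain ⟨v, E, hv, hE, hlayer, hpair⟩ := exists_layer_cake hp
  have hE0 : ∀ t n, 0 ≤ E t n := fun t n => by rcases hE t n with h | h <;> simp [h]
  have hmass : ∑ t, v t * ∑ n, E t n = 1 := by
    simp_rw [mul_sum]
    rw [sum_comm]
    simp [hlayer, hp1]
  obtain ⟨t, hpos, hyt, hxt⟩ := exists_le_mul_of_weighted_sum_le (a := ∑ m, ∑ n, y m n * p n)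
    (b := ∑ m, ∑ n, x m n * |p m - p n|) hv
    (fun t => sum_nonneg fun n _ => hE0 t n)
    (fun t => sum_nonneg fun m _ => sum_nonneg fun n _ => mul_nonneg (hy m n) (hE0 t n))
    (fun t => sum_nonneg fun m _ => sum_nonneg fun n _ => mul_nonneg (hx m n) (sq_nonneg _))
    hmass (by rw [sum_mul_sum_sum_comm v y fun t _ n => E t n]; simp [hlayer])
    (by rw [sum_mul_sum_sum_comm v x fun t m n => (E t m - E t n) ^ 2]; simp [hpair])
  exact ⟨E t, hE t, hpos, hyt, hxt⟩

theorem sum_mul_abs_sq_sub_sq_le {ι : Type*} [Fintype ι] {x : ι → ι → ℝ} {s : ι → ℝ}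
    (hx : ∀ m n, 0 ≤ x m n) (hrow : ∀ m, ∑ n, x m n = 1) (hcol : ∀ n, ∑ m, x m n = 1)
    (hs : ∀ n, 0 ≤ s n) (hs1 : ∑ n, s n ^ 2 = 1) :
    ∑ m, ∑ n, x m n * |s m ^ 2 - s n ^ 2| ≤ 2 * √(∑ m, ∑ n, x m n * (s m - s n) ^ 2) := by
  have hfactor : ∀ m n, x m n * |s m ^ 2 - s n ^ 2|
      = (√(x m n) * (s m + s n)) * (√(x m n) * |s m - s n|) := fun m n => by
    rw [mul_mul_mul_comm, Real.mul_self_sqrt (hx m n), ← abs_of_nonneg (add_nonneg (hs m) (hs n)),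
      ← abs_mul]
    congr 2
    ring
  have hsum_sq : ∑ m, ∑ n, x m n * (s m + s n) ^ 2 ≤ 4 := calc
    _ ≤ ∑ m, ∑ n, (2 * (s m ^ 2 * x m n) + 2 * (s n ^ 2 * x m n)) :=
      sum_le_sum fun m _ => sum_le_sum fun n _ => by nlinarith [hx m n, sq_nonneg (s m - s n)]
    _ = 4 := by
      simp only [sum_add_distrib, ← mul_sum]
      rw [sum_comm (f := fun m n => s n ^ 2 * x m n)]
      simp only [← mul_sum, hrow, hcol, mul_one, hs1]
      norm_num
  simp only [hfactor, ← Fintype.sum_prod_type']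
  refine (Real.sum_mul_le_sqrt_mul_sqrt _ _ _).trans ?_
  simp only [mul_pow, Real.sq_sqrt (hx _ _), sq_abs]
  rw [Fintype.sum_prod_type' (fun m n => x m n * (s m + s n) ^ 2),
    Fintype.sum_prod_type' (fun m n => x m n * (s m - s n) ^ 2)]
  refine mul_le_mul_of_nonneg_right ?_ (Real.sqrt_nonneg _)
  calc √(∑ m, ∑ n, x m n * (s m + s n) ^ 2) ≤ √4 := Real.sqrt_le_sqrt hsum_sq
    _ = 2 := by rw [show (4 : ℝ) = 2 ^ 2 by norm_num, Real.sqrt_sq zero_le_two]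

theorem Matrix.trace_conjStarAlgAut {n 𝕜 : Type*} [Fintype n] [DecidableEq n] [CommRing 𝕜]
    [StarRing 𝕜] (U : unitaryGroup n 𝕜) (A : Matrix n n 𝕜) :
    (Unitary.conjStarAlgAut 𝕜 _ U A).trace = A.trace := by
  rw [Unitary.conjStarAlgAut_apply, trace_mul_cycle, Unitary.coe_star_mul_self, one_mul]

theorem frobNorm_sq {d : ℕ} (A : Matrix (Fin d) (Fin d) ℂ) :
    frobNorm A ^ 2 = ∑ m, ∑ n, Complex.normSq (A m n) := by
  have htrace : (Aᴴ * A).trace = ((∑ m, ∑ n, Complex.normSq (A m n) : ℝ) : ℂ) := by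
    rw [sum_comm]
    simp [trace, mul_apply, Complex.normSq_eq_conj_mul_self]
  rw [frobNorm, htrace, Complex.ofReal_re]
  exact Real.sq_sqrt (sum_nonneg fun m _ => sum_nonneg fun n _ => Complex.normSq_nonneg _)

theorem frobNorm_conjStarAlgAut {d : ℕ} (U : unitaryGroup (Fin d) ℂ)
    (A : Matrix (Fin d) (Fin d) ℂ) :
    frobNorm (Unitary.conjStarAlgAut ℂ _ U A) = frobNorm A := by
  rw [frobNorm, ← star_eq_conjTranspose, ← map_star, ← map_mul, trace_conjStarAlgAut, frobNorm,
    star_eq_conjTranspose]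

theorem sum_normSq_row_eq_one {n : Type*} [Fintype n] [DecidableEq n] {V : Matrix n n ℂ}
    (hV : V ∈ unitaryGroup n ℂ) (i : n) : ∑ j, Complex.normSq (V i j) = 1 := by
  have := congr_fun₂ (mem_unitaryGroup_iff.mp hV) i i
  simp only [mul_apply, star_apply, Complex.star_def, Complex.mul_conj, one_apply_eq] at this
  exact_mod_cast this

theorem sum_normSq_col_eq_one {n : Type*} [Fintype n] [DecidableEq n] {V : Matrix n n ℂ}
    (hV : V ∈ unitaryGroup n ℂ) (j : n) : ∑ i, Complex.normSq (V i j) = 1 := by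
  have := congr_fun₂ (mem_unitaryGroup_iff'.mp hV) j j
  simp only [mul_apply, star_apply, Complex.star_def, ← Complex.normSq_eq_conj_mul_self,
    one_apply_eq] at this
  exact_mod_cast this

theorem Matrix.IsHermitian.mem_unitaryGroup_of_mul_self {n 𝕜 : Type*} [Fintype n]
    [DecidableEq n] [CommRing 𝕜] [StarRing 𝕜] {A : Matrix n n 𝕜} (hA : A.IsHermitian)
    (h : A * A = 1) : A ∈ unitaryGroup n 𝕜 :=
  mem_unitaryGroup_iff.mpr (by rw [star_eq_conjTranspose, hA.eq, h])

theorem Matrix.PosSemidef.sum_sq_sqrt_eigenvalues {n : Type*} [Fintype n] [DecidableEq n]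
    {A : Matrix n n ℂ} (hA : A.PosSemidef) : ∑ i, √(hA.1.eigenvalues i) ^ 2 = A.trace.re := by
  simp [Real.sq_sqrt (hA.eigenvalues_nonneg _), hA.1.trace_eq_sum_eigenvalues]

section MeanEntrySq

variable {k d : ℕ}

noncomputable def meanEntrySq (A : Fin k → Matrix (Fin d) (Fin d) ℂ) (m n : Fin d) : ℝ :=
  1 / (k : ℝ) * ∑ i, Complex.normSq (A i m n)

theorem meanEntrySq_nonneg (A : Fin k → Matrix (Fin d) (Fin d) ℂ) (m n : Fin d) :
    0 ≤ meanEntrySq A m n :=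
  mul_nonneg (by positivity) (sum_nonneg fun i _ => Complex.normSq_nonneg _)

theorem mean_frobNorm_sq_of_apply_eq {M A : Fin k → Matrix (Fin d) (Fin d) ℂ}
    {b : Fin d → Fin d → ℝ} (h : ∀ i m n, M i m n = A i m n * b m n) :
    1 / (k : ℝ) * ∑ i, frobNorm (M i) ^ 2 = ∑ m, ∑ n, meanEntrySq A m n * b m n ^ 2 := by
  simp only [frobNorm_sq, h, Complex.normSq_mul, Complex.normSq_ofReal, meanEntrySq, mul_sum,
    sum_mul]
  rw [sum_comm]
  refine sum_congr rfl fun m _ => ?_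
  rw [sum_comm]
  exact sum_congr rfl fun n _ => sum_congr rfl fun i _ => by ring

theorem sum_meanEntrySq_right (hk : 0 < k) {A : Fin k → Matrix (Fin d) (Fin d) ℂ}
    (hA : ∀ i, A i ∈ unitaryGroup (Fin d) ℂ) (m : Fin d) : ∑ n, meanEntrySq A m n = 1 := by
  simp only [meanEntrySq, ← mul_sum]
  rw [sum_comm]
  simp [sum_normSq_row_eq_one (hA _), hk.ne']

theorem sum_meanEntrySq_left (hk : 0 < k) {A : Fin k → Matrix (Fin d) (Fin d) ℂ}
    (hA : ∀ i, A i ∈ unitaryGroup (Fin d) ℂ) (n : Fin d) : ∑ m, meanEntrySq A m n = 1 := by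
  simp only [meanEntrySq, ← mul_sum]
  rw [sum_comm]
  simp [sum_normSq_col_eq_one (hA _), hk.ne']

end MeanEntrySq

section ConjDiagonal

variable {k d : ℕ} (U : unitaryGroup (Fin d) ℂ)

local notation "φ" => Unitary.conjStarAlgAut ℂ (Matrix (Fin d) (Fin d) ℂ) U

theorem mean_frobNorm_mul_conj_diagonal_sq (T : Fin k → Matrix (Fin d) (Fin d) ℂ)
    (a : Fin d → ℝ) :
    1 / (k : ℝ) * ∑ i, frobNorm (T i * φ (diagonal ((↑) ∘ a))) ^ 2
      = ∑ m, ∑ n, meanEntrySq (fun i => (φ).symm (T i)) m n * a n ^ 2 := by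
  have h : ∀ i, frobNorm (T i * φ (diagonal ((↑) ∘ a)))
      = frobNorm ((φ).symm (T i) * diagonal ((↑) ∘ a)) := fun i => by
    rw [← frobNorm_conjStarAlgAut U ((φ).symm (T i) * _), map_mul, StarAlgEquiv.apply_symm_apply]
  simp only [h]
  exact mean_frobNorm_sq_of_apply_eq fun i m n => mul_diagonal _ _ _ _

theorem mean_frobNorm_commutator_conj_diagonal_sq (X : Fin k → Matrix (Fin d) (Fin d) ℂ)
    (a : Fin d → ℝ) :
    1 / (k : ℝ) * ∑ j, frobNorm (X j * φ (diagonal ((↑) ∘ a)) - φ (diagonal ((↑) ∘ a)) * X j) ^ 2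
      = ∑ m, ∑ n, meanEntrySq (fun j => (φ).symm (X j)) m n * (a m - a n) ^ 2 := by
  have h : ∀ j, frobNorm (X j * φ (diagonal ((↑) ∘ a)) - φ (diagonal ((↑) ∘ a)) * X j)
      = frobNorm ((φ).symm (X j) * diagonal ((↑) ∘ a) - diagonal ((↑) ∘ a) * (φ).symm (X j)) :=
    fun j => by
      rw [← frobNorm_conjStarAlgAut U ((φ).symm (X j) * _ - _), map_sub, map_mul, map_mul,
        StarAlgEquiv.apply_symm_apply]
  simp only [h]
  rw [mean_frobNorm_sq_of_apply_eq (b := fun m n => a n - a m) fun j m n => by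
    simp only [Matrix.sub_apply, mul_diagonal, diagonal_mul, Function.comp_apply,
      Complex.ofReal_sub]
    ring]
  exact sum_congr rfl fun m _ => sum_congr rfl fun n _ => by ring

variable {U}

theorem re_trace_conj_diagonal_ofReal (a : Fin d → ℝ) :
    (φ (diagonal ((↑) ∘ a))).trace.re = ∑ n, a n := by
  rw [trace_conjStarAlgAut, trace_diagonal]
  simp

theorem conj_diagonal_isProjection {e : Fin d → ℝ} (he : ∀ n, e n = 0 ∨ e n = 1)
    (hpos : 0 < ∑ n, e n) :
    φ (diagonal ((↑) ∘ e)) ≠ 0 ∧ (φ (diagonal ((↑) ∘ e)))ᴴ = φ (diagonal ((↑) ∘ e)) ∧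
      φ (diagonal ((↑) ∘ e)) * φ (diagonal ((↑) ∘ e)) = φ (diagonal ((↑) ∘ e)) := by
  refine ⟨fun h => ?_, ?_, ?_⟩
  · have := re_trace_conj_diagonal_ofReal (U := U) e
    rw [h, trace_zero, Complex.zero_re] at this
    linarith
  · rw [← star_eq_conjTranspose, ← map_star, star_eq_conjTranspose, diagonal_conjTranspose]
    congr 2
    ext n
    simp
  · rw [← map_mul, diagonal_mul_diagonal]
    congr 2
    ext n
    rcases he n with h | h <;> simp [h]

end ConjDiagonal

/-- There is a universal constant `C` such that: for positive semidefinite `σ ≠ 0` of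
trace `1`, Hermitian `T₁,…,T_k`, and Hermitian `X₁,…,X_ℓ` squaring to the identity,
with `ε = (1/k)Σᵢ‖Tᵢσ^{1/2}‖_F²` and `δ = (1/ℓ)Σⱼ‖[Xⱼ,σ^{1/2}]‖_F²`, there is a nonzero
orthogonal projection `R` with `(1/k)Σᵢ‖TᵢR‖_F² ≤ C ε Tr(R)` and
`(1/ℓ)Σⱼ‖[Xⱼ,R]‖_F² ≤ C δ^{1/2} Tr(R)`. -/
theorem exists_good_projection : ∃ C : ℝ, 0 < C ∧
    ∀ (d k ℓ : ℕ), 0 < k → 0 < ℓ →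
    ∀ (σ : Matrix (Fin d) (Fin d) ℂ) (hσ : σ.PosSemidef), σ.trace = 1 → σ ≠ 0 →
    ∀ (T : Fin k → Matrix (Fin d) (Fin d) ℂ) (X : Fin ℓ → Matrix (Fin d) (Fin d) ℂ),
      (∀ i, (T i).IsHermitian) → (∀ j, (X j).IsHermitian) →
      (∀ j, X j * X j = 1) →
      ∃ R : Matrix (Fin d) (Fin d) ℂ, R ≠ 0 ∧ Rᴴ = R ∧ R * R = R ∧
        (1 / (k : ℝ)) * ∑ i, frobNorm (T i * R) ^ 2
          ≤ C * ((1 / (k : ℝ)) * ∑ i, frobNorm (T i * hσ.sqrt) ^ 2) * R.trace.re ∧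
        (1 / (ℓ : ℝ)) * ∑ j, frobNorm (X j * R - R * X j) ^ 2
          ≤ C * Real.sqrt ((1 / (ℓ : ℝ)) * ∑ j, frobNorm (X j * hσ.sqrt - hσ.sqrt * X j) ^ 2)
              * R.trace.re := by
  refine ⟨6, by norm_num, fun d k ℓ _ hℓ σ hσ hTr _ T X _ hX hXsq => ?_⟩
  set φ := Unitary.conjStarAlgAut ℂ (Matrix (Fin d) (Fin d) ℂ) hσ.1.eigenvectorUnitary
  set s : Fin d → ℝ := fun n => √(hσ.1.eigenvalues n)
  have hsqrt : hσ.sqrt = φ (diagonal ((↑) ∘ s)) := rfl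
  have hs1 : ∑ n, s n ^ 2 = 1 := by simpa [hTr] using hσ.sum_sq_sqrt_eigenvalues
  have hXU : ∀ j, φ.symm (X j) ∈ unitaryGroup (Fin d) ℂ := fun j =>
    Unitary.map_mem φ.symm ((hX j).mem_unitaryGroup_of_mul_self (hXsq j))
  have hδ := sum_mul_abs_sq_sub_sq_le (meanEntrySq_nonneg _) (sum_meanEntrySq_right hℓ hXU)
    (sum_meanEntrySq_left hℓ hXU) (fun n => Real.sqrt_nonneg _) hs1
  obtain ⟨e, he, hpos, hTe, hXe⟩ := exists_indicator_le (fun n => sq_nonneg (s n)) hs1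
    (meanEntrySq_nonneg fun i => φ.symm (T i)) (meanEntrySq_nonneg fun j => φ.symm (X j))
  obtain ⟨hR0, hRh, hRR⟩ := conj_diagonal_isProjection he hpos
  refine ⟨_, hR0, hRh, hRR, ?_, ?_⟩
  · rw [mean_frobNorm_mul_conj_diagonal_sq, hsqrt, mean_frobNorm_mul_conj_diagonal_sq,
      re_trace_conj_diagonal_ofReal]
    have hε : 0 ≤ ∑ m, ∑ n, meanEntrySq (fun i => φ.symm (T i)) m n * s n ^ 2 :=
      sum_nonneg fun m _ => sum_nonneg fun n _ =>
        mul_nonneg (meanEntrySq_nonneg _ m n) (sq_nonneg _)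
    have he_sq : ∀ n, e n ^ 2 = e n := fun n => by rcases he n with h | h <;> simp [h]
    simp only [he_sq]
    linarith [mul_nonneg hε hpos.le]
  · rw [mean_frobNorm_commutator_conj_diagonal_sq, hsqrt,
      mean_frobNorm_commutator_conj_diagonal_sq, re_trace_conj_diagonal_ofReal]
    linarith [mul_le_mul_of_nonneg_right hδ hpos.le]
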